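/- arXiv:1501.01212 — 4 statements merged into one kernel-verified Lean document; each statement's English description precedes it below -/
import Mathlib

section
/- Let 𝒫 ⊆ ℝ^d be a finite set of vectors whose real linear span is ℝ^d, let L be the set of all integer linear combinations of elements of 𝒫 (a full-rank lattice), and let e ∈ ℝ^d be a nonzero vector such that ⟨e,p⟩ ∈ {0, 1, −1} for every p ∈ 𝒫. Then: (a) every v ∈ L satisfies ⟨e,v⟩ ∈ ℤ, so that L = ⋃_{z∈ℤ} L_e(z), where L_e(z) = L ∩ {x ∈ ℝ^d : ⟨e,x⟩ = z}; (b) each layer L_e(z) (z ∈ ℤ) is nonempty, and L_e(z) = v + L_e(0) for every v ∈ L_e(z); (c) the real linear span of the layer L_e(0) is a (d−1)-dimensional subspace of ℝ^d. -/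
open scoped RealInnerProductSpace

/-- layers of a lattice determined by a vector `e` dual to a
generating set `Pset`. -/
theorem minkowski_voronoi_stmt0 {d : ℕ}
    (Pset : Set (EuclideanSpace ℝ (Fin d))) (hPsetfin : Pset.Finite)
    (hspan : Submodule.span ℝ Pset = ⊤)
    (L : Set (EuclideanSpace ℝ (Fin d)))
    (hL : L = (↑(Submodule.span ℤ Pset) : Set (EuclideanSpace ℝ (Fin d))))
    (e : EuclideanSpace ℝ (Fin d)) (he : e ≠ 0)
    (hdual : ∀ p ∈ Pset, ⟪e, p⟫ ∈ ({0, 1, -1} : Set ℝ)) :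
    -- (a) every lattice vector has integral scalar product with e,
    (∀ v ∈ L, ∃ z : ℤ, ⟪e, v⟫ = (z : ℝ)) ∧
    -- so the lattice is the union of its layers
    L = ⋃ z : ℤ, (L ∩ {x | ⟪e, x⟫ = (z : ℝ)}) ∧
    -- (b) each layer is nonempty,
    (∀ z : ℤ, (L ∩ {x | ⟪e, x⟫ = (z : ℝ)}).Nonempty) ∧
    -- and each layer is a translate of the zero layer by any of its elements
    (∀ z : ℤ, ∀ v ∈ L ∩ {x | ⟪e, x⟫ = (z : ℝ)},
      L ∩ {x | ⟪e, x⟫ = (z : ℝ)} = (v + ·) '' (L ∩ {x | ⟪e, x⟫ = 0})) ∧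
    -- (c) the real span of the zero layer has dimension d - 1
    Module.finrank ℝ (Submodule.span ℝ (L ∩ {x | ⟪e, x⟫ = 0})) = d - 1 := by
  subst hL
  -- integrality
  have hint : ∀ v ∈ Submodule.span ℤ Pset, ∃ z : ℤ, ⟪e, v⟫ = (z : ℝ) := by
    intro v hv
    induction hv using Submodule.span_induction with
    | mem x hx =>
      rcases hdual x hx with h | h | h
      · exact ⟨0, by simpa using h⟩
      · exact ⟨1, by simpa using h⟩
      · exact ⟨-1, by simpa using h⟩
    | zero => exact ⟨0, by simp⟩
    | add x y _ _ hx hy =>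
      obtain ⟨a, ha⟩ := hx; obtain ⟨b, hb⟩ := hy
      exact ⟨a + b, by simp [inner_add_right, ha, hb]⟩
    | smul a x _ hx =>
      obtain ⟨b, hb⟩ := hx
      refine ⟨a * b, ?_⟩
      rw [← Int.cast_smul_eq_zsmul ℝ, real_inner_smul_right, hb]
      push_cast; ring
  -- existence of p₀ with nonzero inner product
  have hex : ∃ p₀ ∈ Pset, ⟪e, p₀⟫ ≠ 0 := by
    by_contra h
    push_neg at h
    have hzero : ∀ x ∈ Submodule.span ℝ Pset, ⟪e, x⟫ = 0 := by
      intro x hx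
      induction hx using Submodule.span_induction with
      | mem y hy => exact h y hy
      | zero => simp
      | add x y _ _ hx hy => simp [inner_add_right, hx, hy]
      | smul a x _ hx => rw [real_inner_smul_right, hx, mul_zero]
    have : ⟪e, e⟫ = 0 := hzero e (by rw [hspan]; trivial)
    exact he (inner_self_eq_zero.mp this)
  obtain ⟨p₀, hp₀P, hp₀⟩ := hex
  have hp₀L : p₀ ∈ Submodule.span ℤ Pset := Submodule.subset_span hp₀P
  obtain ⟨m, hm, hm2⟩ : ∃ m : ℤ, (m : ℝ) = ⟪e, p₀⟫ ∧ m * m = 1 := by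
    rcases hdual p₀ hp₀P with h | h | h
    · exact absurd h hp₀
    · exact ⟨1, by simpa using h.symm, by ring⟩
    · exact ⟨-1, by simpa using h.symm, by ring⟩
  -- (b) nonemptiness
  have hne : ∀ z : ℤ, ((↑(Submodule.span ℤ Pset) : Set _) ∩ {x | ⟪e, x⟫ = (z : ℝ)}).Nonempty := by
    intro z
    refine ⟨(z * m) • p₀, Submodule.smul_mem _ _ hp₀L, ?_⟩
    show ⟪e, (z * m) • p₀⟫ = (z : ℝ)
    rw [← Int.cast_smul_eq_zsmul ℝ, real_inner_smul_right, ← hm]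
    push_cast
    have : (m : ℝ) * (m : ℝ) = 1 := by exact_mod_cast congrArg (Int.cast : ℤ → ℝ) hm2
    linear_combination (z : ℝ) * this
  refine ⟨fun v hv => hint v hv, ?_, hne, ?_, ?_⟩
  · -- union of layers
    ext w
    simp only [Set.mem_iUnion, Set.mem_inter_iff, Set.mem_setOf_eq]
    constructor
    · intro hw
      obtain ⟨z, hz⟩ := hint w hw
      exact ⟨z, hw, hz⟩
    · rintro ⟨z, hw, _⟩; exact hw
  · -- translation
    intro z v hv
    obtain ⟨hvL, hvz⟩ := hv
    ext w
    simp only [Set.mem_inter_iff, Set.mem_setOf_eq, Set.mem_image]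
    constructor
    · rintro ⟨hwL, hwz⟩
      refine ⟨w - v, ⟨Submodule.sub_mem _ hwL hvL, ?_⟩, by abel⟩
      show ⟪e, w - v⟫ = 0
      rw [inner_sub_right, hwz, hvz]; ring
    · rintro ⟨u, ⟨huL, huz⟩, rfl⟩
      refine ⟨Submodule.add_mem _ hvL huL, ?_⟩
      show ⟪e, v + u⟫ = (z : ℝ)
      rw [inner_add_right, hvz, huz]; ring
  · -- dimension of span of zero layer
    set A : Submodule ℝ (EuclideanSpace ℝ (Fin d)) :=
      Submodule.span ℝ ((↑(Submodule.span ℤ Pset) : Set _) ∩ {x | ⟪e, x⟫ = 0}) with hA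
    have hup : A ≤ (ℝ ∙ e)ᗮ := by
      rw [hA, Submodule.span_le]
      rintro x ⟨_, hx⟩
      exact Submodule.mem_orthogonal_singleton_iff_inner_right.mpr hx
    have horth : Module.finrank ℝ ((ℝ ∙ e)ᗮ : Submodule ℝ (EuclideanSpace ℝ (Fin d))) = d - 1 := by
      have h1 : Module.finrank ℝ (ℝ ∙ e) = 1 := finrank_span_singleton he
      have h2 := Submodule.finrank_add_finrank_orthogonal (𝕜 := ℝ) (ℝ ∙ e)
      rw [h1, finrank_euclideanSpace_fin] at h2
      omega
    have hle : Module.finrank ℝ A ≤ d - 1 := horth ▸ Submodule.finrank_mono hup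
    have htop : A ⊔ (ℝ ∙ p₀) = ⊤ := by
      refine le_antisymm le_top ?_
      rw [← hspan, Submodule.span_le]
      intro p hp
      obtain ⟨n, hn⟩ : ∃ n : ℤ, (n : ℝ) = ⟪e, p⟫ * ⟪e, p₀⟫ := by
        rcases hdual p hp with h | h | h
        · exact ⟨0, by rw [h]; simp⟩
        · exact ⟨m, by rw [h, hm]; ring⟩
        · exact ⟨-m, by rw [h]; push_cast; rw [hm]; ring⟩
      have hq : p - n • p₀ ∈ A := by
        apply Submodule.subset_span
        refine ⟨Submodule.sub_mem _ (Submodule.subset_span hp) (Submodule.smul_mem _ _ hp₀L), ?_⟩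
        show ⟪e, p - n • p₀⟫ = 0
        rw [inner_sub_right, ← Int.cast_smul_eq_zsmul ℝ, real_inner_smul_right, hn]
        have : ⟪e, p₀⟫ * ⟪e, p₀⟫ = 1 := by
          have := congrArg (Int.cast : ℤ → ℝ) hm2
          push_cast at this
          rw [hm] at this
          linarith [this]
        rw [mul_assoc, this, mul_one, sub_self]
      have hmem : p ∈ A ⊔ (ℝ ∙ p₀) := by
        have h1 : p - n • p₀ ∈ A ⊔ (ℝ ∙ p₀) := Submodule.mem_sup_left hq
        have h2 : (n : ℤ) • p₀ ∈ A ⊔ (ℝ ∙ p₀) := by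
          rw [← Int.cast_smul_eq_zsmul ℝ]
          exact Submodule.mem_sup_right
            (Submodule.smul_mem _ _ (Submodule.mem_span_singleton_self p₀))
        have := Submodule.add_mem _ h1 h2
        simpa using this
      exact hmem
    have hge : d ≤ Module.finrank ℝ A + 1 := by
      have hsum := Submodule.finrank_sup_add_finrank_inf_eq A (ℝ ∙ p₀)
      have hp₀ne : p₀ ≠ 0 := fun h => hp₀ (by simp [h])
      rw [htop, finrank_span_singleton hp₀ne, finrank_top, finrank_euclideanSpace_fin] at hsum
      omega
    have hd : 1 ≤ d := by
      by_contra h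
      push_neg at h
      interval_cases d
      exact he (Subsingleton.elim _ _)
    omega
end

section
/- Let 𝒫 ⊆ ℝ^d be a symmetric set of vectors, let e ∈ ℝ^d be nonzero and b ≥ 0. Suppose that some p ∈ 𝒫 satisfies ⟨p,e⟩ ≠ 0 (so that, by symmetry of 𝒫, the scalar products ⟨p,e⟩ take positive, negative and zero values on 𝒫), and that the set {p ∈ 𝒫 : ⟨p,e⟩ = 0} spans the orthogonal complement of e in ℝ^d. Then b·z(e) = P(f_e), i.e., {λe : −b ≤ λ ≤ b} = {x ∈ ℝ^d : ⟨p,x⟩ ≤ b|⟨p,e⟩| for all p ∈ 𝒫}. -/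
/-!
For `p ∈ 𝒫` with `⟪p, e⟫ = 0` the constraints for `p` and `-p` force `⟪p, x⟫ = 0`, so a feasible
`x` is orthogonal to their span `eᗮ` and hence `x = l • e`. A single `p` with `⟪p, e⟫ ≠ 0`,
together with `-p`, then gives `|l| ≤ b`.
-/

open scoped RealInnerProductSpace

section

variable {E : Type*} [NormedAddCommGroup E] [InnerProductSpace ℝ E]

theorem Submodule.mem_orthogonal_span_of_forall_inner_eq_zero {S : Set E} {x : E}
    (h : ∀ p ∈ S, ⟪p, x⟫ = 0) : x ∈ (Submodule.span ℝ S)ᗮ := by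
  have hle : Submodule.span ℝ S ≤ (ℝ ∙ x)ᗮ :=
    Submodule.span_le.2 fun p hp ↦ Submodule.mem_orthogonal_singleton_iff_inner_left.2 (h p hp)
  exact fun u hu ↦ Submodule.mem_orthogonal_singleton_iff_inner_left.1 (hle hu)

theorem inner_smul_right_le_mul_abs {p e : E} {l b : ℝ} (hl : |l| ≤ b) :
    ⟪p, l • e⟫ ≤ b * |⟪p, e⟫| :=
  calc ⟪p, l • e⟫ = l * ⟪p, e⟫ := real_inner_smul_right p e l
    _ ≤ |l| * |⟪p, e⟫| := (le_abs_self _).trans (abs_mul _ _).le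
    _ ≤ b * |⟪p, e⟫| := by gcongr

theorem abs_le_of_inner_smul_right_le {p e : E} {l b : ℝ} (hpe : ⟪p, e⟫ ≠ 0)
    (hp : ⟪p, l • e⟫ ≤ b * |⟪p, e⟫|) (hnp : ⟪-p, l • e⟫ ≤ b * |⟪-p, e⟫|) : |l| ≤ b := by
  rw [real_inner_smul_right] at hp
  rw [inner_neg_left, inner_neg_left, real_inner_smul_right, abs_neg] at hnp
  have h : |l| * |⟪p, e⟫| ≤ b * |⟪p, e⟫| := by
    rw [← abs_mul]
    exact abs_le.2 ⟨by linarith, hp⟩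
  exact le_of_mul_le_mul_right h (abs_pos.2 hpe)

theorem mem_span_singleton_of_forall_inner_le {P : Set E} (hsym : ∀ p ∈ P, -p ∈ P) {e x : E}
    {b : ℝ} (hperp : Submodule.span ℝ {p ∈ P | ⟪p, e⟫ = 0} = (ℝ ∙ e)ᗮ)
    (hx : ∀ p ∈ P, ⟪p, x⟫ ≤ b * |⟪p, e⟫|) : x ∈ ℝ ∙ e := by
  have horth : ∀ p ∈ {p ∈ P | ⟪p, e⟫ = 0}, ⟪p, x⟫ = 0 := by
    rintro p ⟨hp, hpe⟩
    have hle := hx p hp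
    have hge := hx (-p) (hsym p hp)
    rw [hpe, abs_zero, mul_zero] at hle
    rw [inner_neg_left, inner_neg_left, hpe, neg_zero, abs_zero, mul_zero, neg_nonpos] at hge
    exact le_antisymm hle hge
  have hx' := Submodule.mem_orthogonal_span_of_forall_inner_eq_zero horth
  rwa [hperp, Submodule.orthogonal_orthogonal] at hx'

end

theorem minkowski_voronoi_stmt3_general {d : ℕ}
    (Pset : Set (EuclideanSpace ℝ (Fin d)))
    (hsym : ∀ p ∈ Pset, -p ∈ Pset)
    (e : EuclideanSpace ℝ (Fin d))
    (b : ℝ)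
    (hex : ∃ p ∈ Pset, ⟪p, e⟫ ≠ 0)
    (hperp : Submodule.span ℝ {p ∈ Pset | ⟪p, e⟫ = 0} =
      (Submodule.span ℝ ({e} : Set (EuclideanSpace ℝ (Fin d))))ᗮ) :
    {x : EuclideanSpace ℝ (Fin d) | ∃ l : ℝ, -b ≤ l ∧ l ≤ b ∧ x = l • e} =
      {x : EuclideanSpace ℝ (Fin d) | ∀ p ∈ Pset, ⟪p, x⟫ ≤ b * |⟪p, e⟫|} := by
  ext x
  constructor
  · rintro ⟨l, hlb, hlb', rfl⟩ p _
    exact inner_smul_right_le_mul_abs (abs_le.2 ⟨hlb, hlb'⟩)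
  · intro hx
    obtain ⟨l, rfl⟩ := Submodule.mem_span_singleton.1
      (mem_span_singleton_of_forall_inner_le hsym hperp hx)
    obtain ⟨p, hp, hpe⟩ := hex
    have hl := abs_le_of_inner_smul_right_le hpe (hx p hp) (hx (-p) (hsym p hp))
    exact ⟨l, (abs_le.1 hl).1, (abs_le.1 hl).2, rfl⟩

/-- for a symmetric set of vectors `Pset` whose scalar products with `e`
take a nonzero value, and whose `e`-orthogonal part spans the orthogonal complement
of `e`, the segment `b·z(e)` equals `P(f_e)`. -/
theorem minkowski_voronoi_stmt3 {d : ℕ}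
    (Pset : Set (EuclideanSpace ℝ (Fin d)))
    (hsym : ∀ p ∈ Pset, -p ∈ Pset)
    (e : EuclideanSpace ℝ (Fin d)) (he : e ≠ 0)
    (b : ℝ) (hb : 0 ≤ b)
    (hex : ∃ p ∈ Pset, ⟪p, e⟫ ≠ 0)
    (hperp : Submodule.span ℝ {p ∈ Pset | ⟪p, e⟫ = 0} =
      (Submodule.span ℝ ({e} : Set (EuclideanSpace ℝ (Fin d))))ᗮ) :
    {x : EuclideanSpace ℝ (Fin d) | ∃ l : ℝ, -b ≤ l ∧ l ≤ b ∧ x = l • e} =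
      {x : EuclideanSpace ℝ (Fin d) | ∀ p ∈ Pset, ⟪p, x⟫ ≤ b * |⟪p, e⟫|} :=
  minkowski_voronoi_stmt3_general Pset hsym e b hex hperp
end

section
/- Let P ⊆ ℝ^d be a nonempty compact convex set, e ∈ ℝ^d nonzero, b > 0, and let u ∈ ℝ^d be a nonzero vector with ⟨u,e⟩ = 0. Let F be the exposed face of P in direction u. Then the exposed face of P + b·z(e) in direction u equals F + b·z(e). Moreover: (i) if F is parallel to e (some line with direction vector e meets F in more than one point), then dim(F + b·z(e)) = dim F; (ii) if F is transversal to e (every line with direction vector e meets F in at most one point), then every element of F + b·z(e) has a unique representation f + λe with f ∈ F and λ ∈ [−b,b], and dim(F + b·z(e)) = dim F + 1. -/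
open scoped RealInnerProductSpace Pointwise

/-- The segment `b·z(e) = {λ • e : -b ≤ λ ≤ b}`. -/
def segZ {d : ℕ} (e : EuclideanSpace ℝ (Fin d)) (b : ℝ) : Set (EuclideanSpace ℝ (Fin d)) :=
  {x | ∃ l : ℝ, -b ≤ l ∧ l ≤ b ∧ x = l • e}

/-- The exposed face of `P` in direction `u`. -/
def expFace {d : ℕ} (P : Set (EuclideanSpace ℝ (Fin d))) (u : EuclideanSpace ℝ (Fin d)) :
    Set (EuclideanSpace ℝ (Fin d)) :=
  {x ∈ P | ∀ y ∈ P, ⟪u, y⟫ ≤ ⟪u, x⟫}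

/-- The dimension of a set: the dimension of the direction of its affine span. -/
noncomputable def sdim {d : ℕ} (S : Set (EuclideanSpace ℝ (Fin d))) : ℕ :=
  Module.finrank ℝ (affineSpan ℝ S).direction

lemma vectorSpan_add' {d : ℕ} (S T : Set (EuclideanSpace ℝ (Fin d)))
    (hS : S.Nonempty) (hT : T.Nonempty) :
    vectorSpan ℝ (S + T) = vectorSpan ℝ S ⊔ vectorSpan ℝ T := by
  apply le_antisymm
  · rw [vectorSpan_def, Submodule.span_le]
    rintro x hx
    rw [Set.mem_vsub] at hx
    obtain ⟨a, ha, c, hc, rfl⟩ := hx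
    rw [Set.mem_add] at ha hc
    obtain ⟨s1, hs1, t1, ht1, rfl⟩ := ha
    obtain ⟨s2, hs2, t2, ht2, rfl⟩ := hc
    have hrw : (s1 + t1) -ᵥ (s2 + t2) = (s1 -ᵥ s2) + (t1 -ᵥ t2) := by
      simp only [vsub_eq_sub]; abel
    rw [hrw]
    exact Submodule.add_mem_sup (vsub_mem_vectorSpan ℝ hs1 hs2)
      (vsub_mem_vectorSpan ℝ ht1 ht2)
  · obtain ⟨t0, ht0⟩ := hT
    obtain ⟨s0, hs0⟩ := hS
    apply sup_le
    · rw [vectorSpan_def, Submodule.span_le]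
      rintro x hx
      rw [Set.mem_vsub] at hx
      obtain ⟨a, ha, c, hc, rfl⟩ := hx
      have : a -ᵥ c = (a + t0) -ᵥ (c + t0) := by simp only [vsub_eq_sub]; abel
      rw [this]
      exact vsub_mem_vectorSpan ℝ (Set.add_mem_add ha ht0) (Set.add_mem_add hc ht0)
    · rw [vectorSpan_def, Submodule.span_le]
      rintro x hx
      rw [Set.mem_vsub] at hx
      obtain ⟨a, ha, c, hc, rfl⟩ := hx
      have : a -ᵥ c = (s0 + a) -ᵥ (s0 + c) := by simp only [vsub_eq_sub]; abel
      rw [this]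
      exact vsub_mem_vectorSpan ℝ (Set.add_mem_add hs0 ha) (Set.add_mem_add hs0 hc)

lemma vectorSpan_segZ {d : ℕ} (e : EuclideanSpace ℝ (Fin d)) (b : ℝ) (hb : 0 < b) :
    vectorSpan ℝ (segZ e b) = Submodule.span ℝ {e} := by
  apply le_antisymm
  · rw [vectorSpan_def, Submodule.span_le]
    rintro x hx
    rw [Set.mem_vsub] at hx
    obtain ⟨a, ⟨l1, _, _, rfl⟩, c, ⟨l2, _, _, rfl⟩, rfl⟩ := hx
    have : l1 • e -ᵥ l2 • e = (l1 - l2) • e := by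
      simp only [vsub_eq_sub, sub_smul]
    rw [this]
    exact Submodule.smul_mem _ _ (Submodule.mem_span_singleton_self e)
  · rw [Submodule.span_singleton_le_iff_mem]
    have h1 : b • e ∈ segZ e b := ⟨b, by linarith, le_refl b, rfl⟩
    have h0 : (0 : EuclideanSpace ℝ (Fin d)) ∈ segZ e b :=
      ⟨0, by linarith, by linarith, by simp⟩
    have : b • e -ᵥ (0 : EuclideanSpace ℝ (Fin d)) ∈ vectorSpan ℝ (segZ e b) :=
      vsub_mem_vectorSpan ℝ h1 h0
    rw [vsub_eq_sub, sub_zero] at this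
    have := Submodule.smul_mem _ b⁻¹ this
    rwa [smul_smul, inv_mul_cancel₀ hb.ne', one_smul] at this

lemma cone_of_mem_vectorSpan {d : ℕ} (F : Set (EuclideanSpace ℝ (Fin d)))
    (hF : F.Nonempty) (hconv : Convex ℝ F)
    (v : EuclideanSpace ℝ (Fin d)) (hv : v ∈ vectorSpan ℝ F) :
    ∃ f1 ∈ F, ∃ f2 ∈ F, ∃ t : ℝ, 0 < t ∧ t • v = f1 - f2 := by
  obtain ⟨f0, hf0⟩ := hF
  let U : Submodule ℝ (EuclideanSpace ℝ (Fin d)) :=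
    { carrier := {v | ∃ f1 ∈ F, ∃ f2 ∈ F, ∃ t : ℝ, 0 < t ∧ t • v = f1 - f2}
      zero_mem' := ⟨f0, hf0, f0, hf0, 1, one_pos, by simp⟩
      add_mem' := by
        rintro v1 v2 ⟨f1, hf1, f2, hf2, t1, ht1, h1⟩ ⟨g1, hg1, g2, hg2, t2, ht2, h2⟩
        have hs : (0:ℝ) < t1 + t2 := by linarith
        refine ⟨(t2/(t1+t2)) • f1 + (t1/(t1+t2)) • g1,
          hconv hf1 hg1 (by positivity) (by positivity) (by field_simp; ring),
          (t2/(t1+t2)) • f2 + (t1/(t1+t2)) • g2,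
          hconv hf2 hg2 (by positivity) (by positivity) (by field_simp; ring),
          t1 * t2 / (t1 + t2), by positivity, ?_⟩
        have e1 : (t1 * t2 / (t1 + t2)) • v1 = (t2/(t1+t2)) • (t1 • v1) := by
          rw [smul_smul]; ring_nf
        have e2 : (t1 * t2 / (t1 + t2)) • v2 = (t1/(t1+t2)) • (t2 • v2) := by
          rw [smul_smul]; ring_nf
        rw [smul_add, e1, e2, h1, h2, smul_sub, smul_sub]
        abel
      smul_mem' := by
        rintro c v ⟨f1, hf1, f2, hf2, t, ht, h⟩
        rcases lt_trichotomy c 0 with hc | hc | hc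
        · refine ⟨f2, hf2, f1, hf1, t / (-c), div_pos ht (by linarith), ?_⟩
          rw [smul_smul]
          have : t / (-c) * c = -t := by field_simp [hc.ne]
          rw [this, neg_smul, h, neg_sub]
        · subst hc
          exact ⟨f0, hf0, f0, hf0, 1, one_pos, by simp⟩
        · refine ⟨f1, hf1, f2, hf2, t / c, by positivity, ?_⟩
          rw [smul_smul]
          have : t / c * c = t := by field_simp
          rw [this, h] }
  have hle : vectorSpan ℝ F ≤ U := by
    rw [vectorSpan_def, Submodule.span_le]
    rintro x hx
    rw [Set.mem_vsub] at hx
    obtain ⟨a, ha, c, hc, rfl⟩ := hx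
    exact ⟨a, ha, c, hc, 1, one_pos, by simp [vsub_eq_sub]⟩
  exact hle hv

/-- if `⟪u, e⟫ = 0` then the exposed face of `P + b·z(e)` in direction `u`
is `F + b·z(e)`, where `F` is the exposed face of `P` in direction `u`; moreover
(i) if `F` is parallel to `e` then the dimension does not change, and (ii) if `F` is
transversal to `e` then the representation `f + λ • e` is unique and the dimension
increases by one. -/
theorem minkowski_voronoi_stmt5 {d : ℕ}
    (P : Set (EuclideanSpace ℝ (Fin d))) (hne : P.Nonempty)
    (hcomp : IsCompact P) (hconv : Convex ℝ P)
    (e : EuclideanSpace ℝ (Fin d)) (he : e ≠ 0) (b : ℝ) (hb : 0 < b)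
    (u : EuclideanSpace ℝ (Fin d)) (hu : u ≠ 0) (hue : ⟪u, e⟫ = 0) :
    expFace (P + segZ e b) u = expFace P u + segZ e b ∧
    -- (i) F parallel to e
    ((∃ x ∈ expFace P u, ∃ t : ℝ, t ≠ 0 ∧ x + t • e ∈ expFace P u) →
      sdim (expFace P u + segZ e b) = sdim (expFace P u)) ∧
    -- (ii) F transversal to e
    ((∀ x ∈ expFace P u, ∀ t : ℝ, x + t • e ∈ expFace P u → t = 0) →
      (∀ f₁ ∈ expFace P u, ∀ f₂ ∈ expFace P u, ∀ l₁ l₂ : ℝ,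
        -b ≤ l₁ → l₁ ≤ b → -b ≤ l₂ → l₂ ≤ b →
        f₁ + l₁ • e = f₂ + l₂ • e → f₁ = f₂ ∧ l₁ = l₂) ∧
      sdim (expFace P u + segZ e b) = sdim (expFace P u) + 1) := by
  set F := expFace P u with hF
  -- inner product kills the segment direction
  have hin : ∀ (p : EuclideanSpace ℝ (Fin d)) (l : ℝ), ⟪u, p + l • e⟫ = ⟪u, p⟫ := by
    intro p l
    rw [inner_add_right, real_inner_smul_right, hue]
    ring
  have hZ0 : (0 : EuclideanSpace ℝ (Fin d)) ∈ segZ e b :=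
    ⟨0, by linarith, by linarith, by simp⟩
  have hZne : (segZ e b).Nonempty := ⟨0, hZ0⟩
  -- F is nonempty
  have hFne : F.Nonempty := by
    obtain ⟨x, hx, hmax⟩ := hcomp.exists_isMaxOn hne
      ((continuous_const.inner continuous_id).continuousOn
        (f := fun y : EuclideanSpace ℝ (Fin d) => ⟪u, y⟫))
    exact ⟨x, hx, fun y hy => hmax hy⟩
  -- F is convex
  have hFconv : Convex ℝ F := by
    rintro x ⟨hxP, hxm⟩ y ⟨hyP, hym⟩ a c ha hc hac
    refine ⟨hconv hxP hyP ha hc hac, fun z hz => ?_⟩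
    have h1 := hxm z hz
    have hxy := hxm y hyP
    have hyx := hym x hxP
    rw [inner_add_right, real_inner_smul_right, real_inner_smul_right]
    have hXY : (⟪u, y⟫ : ℝ) = ⟪u, x⟫ := le_antisymm hxy hyx
    have hrw : a * ⟪u, x⟫ + c * ⟪u, y⟫ = ⟪u, x⟫ := by
      rw [hXY, ← add_mul, hac, one_mul]
    rw [hrw]
    exact h1
  -- Part 1
  have part1 : expFace (P + segZ e b) u = F + segZ e b := by
    ext x
    constructor
    · rintro ⟨hxPZ, hmax⟩
      rw [Set.mem_add] at hxPZ
      obtain ⟨p, hp, z, ⟨l, hl1, hl2, rfl⟩, rfl⟩ := hxPZ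
      refine Set.add_mem_add ⟨hp, fun y hy => ?_⟩ ⟨l, hl1, hl2, rfl⟩
      have := hmax (y + (0:ℝ) • e) (Set.add_mem_add hy ⟨0, by linarith, by linarith, rfl⟩)
      rwa [hin, hin] at this
    · rintro hx
      rw [Set.mem_add] at hx
      obtain ⟨f, ⟨hfP, hfm⟩, z, ⟨l, hl1, hl2, rfl⟩, rfl⟩ := hx
      refine ⟨Set.add_mem_add hfP ⟨l, hl1, hl2, rfl⟩, fun y hy => ?_⟩
      rw [Set.mem_add] at hy
      obtain ⟨p, hp, z', ⟨l', hl1', hl2', rfl⟩, rfl⟩ := hy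
      rw [hin, hin]
      exact hfm p hp
  -- vector spans
  have hVsum : vectorSpan ℝ (F + segZ e b) = vectorSpan ℝ F ⊔ Submodule.span ℝ {e} := by
    rw [vectorSpan_add' F (segZ e b) hFne hZne, vectorSpan_segZ e b hb]
  have hsdim : ∀ S : Set (EuclideanSpace ℝ (Fin d)),
      sdim S = Module.finrank ℝ (vectorSpan ℝ S) := by
    intro S
    rw [sdim, direction_affineSpan]
  refine ⟨part1, ?_, ?_⟩
  · -- (i) parallel
    rintro ⟨x, hx, t, ht, hxt⟩
    have heV : e ∈ vectorSpan ℝ F := by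
      have : (x + t • e) -ᵥ x ∈ vectorSpan ℝ F := vsub_mem_vectorSpan ℝ hxt hx
      have h2 : (x + t • e) -ᵥ x = t • e := by
        simp only [vsub_eq_sub]; abel
      rw [h2] at this
      have := Submodule.smul_mem _ t⁻¹ this
      rwa [smul_smul, inv_mul_cancel₀ ht, one_smul] at this
    have : Submodule.span ℝ {e} ≤ vectorSpan ℝ F :=
      (Submodule.span_singleton_le_iff_mem _ _).2 heV
    rw [hsdim, hsdim, hVsum, sup_eq_left.2 this]
  · -- (ii) transversal
    intro htr
    constructor
    · intro f₁ hf₁ f₂ hf₂ l₁ l₂ _ _ _ _ heq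
      have hmem : f₂ + (l₂ - l₁) • e ∈ F := by
        have h' : f₂ + (l₂ - l₁) • e + l₁ • e = f₁ + l₁ • e := by
          rw [heq, sub_smul]; abel
        have h2 : f₂ + (l₂ - l₁) • e = f₁ := add_right_cancel h'
        rw [h2]; exact hf₁
      have hl0 := htr f₂ hf₂ (l₂ - l₁) hmem
      have hl : l₁ = l₂ := by linarith
      constructor
      · have : f₁ + l₁ • e = f₂ + l₁ • e := by rw [heq, hl]
        exact add_right_cancel this
      · exact hl
    · -- dimension increases by one
      have heV : e ∉ vectorSpan ℝ F := by
        intro heV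
        obtain ⟨f1, hf1, f2, hf2, t, ht, hte⟩ := cone_of_mem_vectorSpan F hFne hFconv e heV
        have : f2 + t • e ∈ F := by
          have : f2 + t • e = f1 := by rw [hte]; abel
          rw [this]; exact hf1
        exact ht.ne' (htr f2 hf2 t this)
      have hinf : vectorSpan ℝ F ⊓ Submodule.span ℝ {e} = ⊥ := by
        rw [eq_bot_iff]
        rintro x ⟨hxV, hxe⟩
        obtain ⟨c, rfl⟩ := Submodule.mem_span_singleton.1 hxe
        rcases eq_or_ne c 0 with rfl | hc
        · simp
        · exfalso
          apply heV
          have := Submodule.smul_mem _ c⁻¹ hxV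
          rwa [smul_smul, inv_mul_cancel₀ hc, one_smul] at this
      have hkey := Submodule.finrank_sup_add_finrank_inf_eq
        (vectorSpan ℝ F) (Submodule.span ℝ {e})
      rw [hinf, finrank_bot, finrank_span_singleton he] at hkey
      rw [hsdim, hsdim, hVsum]
      omega
end

section
/- Let 𝒫 ⊆ ℝ^d be a symmetric set of vectors, e ∈ ℝ^d nonzero and b ≥ 0. Suppose that ⟨p,e⟩ ∈ {0, 1, −1} for all p ∈ 𝒫, that the scalar products ⟨p,e⟩ take all three values 0, 1, −1 on 𝒫, and that the set {p ∈ 𝒫 : ⟨p,e⟩ = 0} spans the orthogonal complement of e in ℝ^d. Then b·z(e) = P(a_e), i.e., {λe : −b ≤ λ ≤ b} = {x ∈ ℝ^d : ⟨p,x⟩ ≤ b⟨p,e⟩² for all p ∈ 𝒫}. -/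
open scoped RealInnerProductSpace

/-- if the scalar products `⟪p, e⟫` take exactly the values `0, 1, -1`
on the symmetric set `Pset` (all three values being attained), and the vectors of `Pset`
orthogonal to `e` span the orthogonal complement of `e`, then the segment `b·z(e)`
equals the Voronoi parallelotope `P(a_e)` of the rank-one form `a_e(p) = b⟪p, e⟫²`. -/
theorem minkowski_voronoi_stmt7 {d : ℕ}
    (Pset : Set (EuclideanSpace ℝ (Fin d)))
    (hsym : ∀ p ∈ Pset, -p ∈ Pset)
    (e : EuclideanSpace ℝ (Fin d)) (he : e ≠ 0)
    (b : ℝ) (hb : 0 ≤ b)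
    (hdual : ∀ p ∈ Pset, ⟪p, e⟫ ∈ ({0, 1, -1} : Set ℝ))
    (h0 : ∃ p ∈ Pset, ⟪p, e⟫ = 0)
    (h1 : ∃ p ∈ Pset, ⟪p, e⟫ = 1)
    (hm1 : ∃ p ∈ Pset, ⟪p, e⟫ = -1)
    (hperp : Submodule.span ℝ {p ∈ Pset | ⟪p, e⟫ = 0} =
      (Submodule.span ℝ ({e} : Set (EuclideanSpace ℝ (Fin d))))ᗮ) :
    {x : EuclideanSpace ℝ (Fin d) | ∃ l : ℝ, -b ≤ l ∧ l ≤ b ∧ x = l • e} =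
      {x : EuclideanSpace ℝ (Fin d) | ∀ p ∈ Pset, ⟪p, x⟫ ≤ b * ⟪p, e⟫ ^ 2} := by
  ext x
  simp only [Set.mem_setOf_eq]
  constructor
  · rintro ⟨l, hl1, hl2, rfl⟩ p hp
    rw [real_inner_smul_right]
    rcases hdual p hp with h | h | h
    · simp [h]
    · rw [h]; nlinarith
    · rw [h]; nlinarith
  · intro hx
    -- first: ⟪p, x⟫ = 0 for all p ∈ Pset with ⟪p,e⟫ = 0
    have hz : ∀ p ∈ Pset, ⟪p, e⟫ = 0 → ⟪p, x⟫ = 0 := by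
      intro p hp hpe
      have h1 := hx p hp
      have h2 := hx (-p) (hsym p hp)
      rw [inner_neg_left, inner_neg_left, hpe] at h2
      rw [hpe] at h1
      simp only [neg_zero] at h1 h2
      nlinarith
    -- x is orthogonal to (span e)ᗮ, hence x ∈ span {e}
    have hxmem : x ∈ Submodule.span ℝ ({e} : Set (EuclideanSpace ℝ (Fin d))) := by
      rw [← Submodule.orthogonal_orthogonal
        (Submodule.span ℝ ({e} : Set (EuclideanSpace ℝ (Fin d)))), ← hperp,
        Submodule.mem_orthogonal]
      intro u hu
      induction hu using Submodule.span_induction with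
      | mem p hp => exact hz p hp.1 hp.2
      | zero => simp
      | add u v _ _ hu hv => rw [inner_add_left, hu, hv, add_zero]
      | smul c u _ hu => rw [inner_smul_left, hu, mul_zero]
    rw [Submodule.mem_span_singleton] at hxmem
    obtain ⟨l, rfl⟩ := hxmem
    obtain ⟨p1, hp1, hp1e⟩ := h1
    obtain ⟨pm, hpm, hpme⟩ := hm1
    have i1 := hx p1 hp1
    have i2 := hx pm hpm
    rw [real_inner_smul_right, hp1e] at i1
    rw [real_inner_smul_right, hpme] at i2
    refine ⟨l, by nlinarith, by nlinarith, rfl⟩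
end
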